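/- Let B be a positive bounded operator on a complex Hilbert space H, and let E be the set of extreme points of the operator interval [0,B]. Then E, with the Loewner order, is a lattice: for all C, D ∈ E there exists M ∈ E with M ≤ C, M ≤ D, and G ≤ M for every G ∈ E with G ≤ C and G ≤ D; and there exists N ∈ E with C ≤ N, D ≤ N, and N ≤ G for every G ∈ E with C ≤ G and D ≤ G. -/

import Mathlib

/-!
Write `B = r⋆ r`. Douglas' factorization lemma shows that `T ↦ r⋆ T r` maps the operator interval
`[0, P]`, where `P` is the projection onto the closure `K` of the range of `r`, affinely and
order-isomorphically onto `[0, B]`. So the extreme points of `[0, B]` are the images of the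
extreme points of `[0, P]`, which are the projections below `P`; ordered by `≤`, these are a copy
of the lattice of closed subspaces of `K`.
-/

open scoped ComplexOrder

/-- `A` is a positive operator: `⟪A x, x⟫ ≥ 0` for all `x`. -/
def IsPosOp {H : Type*} [NormedAddCommGroup H] [InnerProductSpace ℂ H]
    (A : H →L[ℂ] H) : Prop :=
  ∀ x : H, 0 ≤ (inner ℂ (A x) x : ℂ)

/-- The Loewner order: `A ≤ B` iff `B - A` is positive. -/
def OpLe {H : Type*} [NormedAddCommGroup H] [InnerProductSpace ℂ H]
    (A B : H →L[ℂ] H) : Prop :=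
  IsPosOp (B - A)

/-- The quadratic form of an operator: `A[x] = re ⟪A x, x⟫`. -/
noncomputable def QF {H : Type*} [NormedAddCommGroup H] [InnerProductSpace ℂ H]
    (A : H →L[ℂ] H) (x : H) : ℝ :=
  (inner ℂ (A x) x : ℂ).re

/-- `A` and `B` are singular: the only positive operator below both is `0`. -/
def SingOp {H : Type*} [NormedAddCommGroup H] [InnerProductSpace ℂ H]
    (A B : H →L[ℂ] H) : Prop :=
  ∀ C : H →L[ℂ] H, IsPosOp C → OpLe C A → OpLe C B → C = 0

/-- `B` is `A`-absolutely continuous: `B` is the strong limit of a monotone increasing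
sequence of positive operators, each dominated by a nonnegative multiple of `A`. -/
def AbsCont {H : Type*} [NormedAddCommGroup H] [InnerProductSpace ℂ H]
    (B A : H →L[ℂ] H) : Prop :=
  ∃ Bn : ℕ → H →L[ℂ] H,
    (∀ n, IsPosOp (Bn n)) ∧
    (∀ m n, m ≤ n → OpLe (Bn m) (Bn n)) ∧
    (∀ n, ∃ c : ℝ, 0 ≤ c ∧ OpLe (Bn n) (c • A)) ∧
    (∀ x : H, Filter.Tendsto (fun n => Bn n x) Filter.atTop (nhds (B x)))

/-- `S = [A]B`: the quadratic form of `S` is `sup_n inf_y (B[x-y] + n·A[y])`. -/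
def IsShort {H : Type*} [NormedAddCommGroup H] [InnerProductSpace ℂ H]
    (A B S : H →L[ℂ] H) : Prop :=
  ∀ x : H, QF S x = ⨆ n : ℕ, ⨅ y : H, (QF B (x - y) + (n : ℝ) * QF A y)

open Set ContinuousLinearMap

section Loewner
variable {H : Type*} [NormedAddCommGroup H] [InnerProductSpace ℂ H]

theorem isPosOp_iff_nonneg (A : H →L[ℂ] H) : IsPosOp A ↔ 0 ≤ A := by
  rw [nonneg_iff_isPositive, isPositive_iff, IsPosOp, and_iff_right_of_imp]
  exact fun h => (LinearMap.isSymmetric_iff_inner_map_self_real _).2 fun x =>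
    Complex.conj_eq_iff_im.2 (Complex.nonneg_iff.1 (h x)).2.symm

theorem opLe_iff_le (A B : H →L[ℂ] H) : OpLe A B ↔ A ≤ B := by
  rw [OpLe, isPosOp_iff_nonneg, nonneg_iff_isPositive, le_def]

theorem setOf_isPosOp_and_opLe_eq_Icc (B : H →L[ℂ] H) :
    {A : H →L[ℂ] H | IsPosOp A ∧ OpLe A B} = Icc 0 B := by
  ext A
  simp only [mem_ofPred_eq, mem_Icc, isPosOp_iff_nonneg, opLe_iff_le]

end Loewner

namespace OrderEmbedding
variable {α β : Type*} [Lattice α] [Preorder β] (f : α ↪o β)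

theorem exists_greatest_lower_bound_mem_range {c d : β} (hc : c ∈ range f) (hd : d ∈ range f) :
    ∃ m ∈ range f, m ≤ c ∧ m ≤ d ∧ ∀ g ∈ range f, g ≤ c → g ≤ d → g ≤ m := by
  obtain ⟨a, rfl⟩ := hc
  obtain ⟨b, rfl⟩ := hd
  refine ⟨f (a ⊓ b), mem_range_self _, f.monotone inf_le_left, f.monotone inf_le_right, ?_⟩
  rintro _ ⟨g, rfl⟩ hga hgb
  exact f.le_iff_le.2 (le_inf (f.le_iff_le.1 hga) (f.le_iff_le.1 hgb))

theorem exists_least_upper_bound_mem_range {c d : β} (hc : c ∈ range f) (hd : d ∈ range f) :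
    ∃ n ∈ range f, c ≤ n ∧ d ≤ n ∧ ∀ g ∈ range f, c ≤ g → d ≤ g → n ≤ g :=
  f.dual.exists_greatest_lower_bound_mem_range hc hd

end OrderEmbedding

theorem LinearMap.image_extremePoints_of_injOn {𝕜 E F : Type*} [Ring 𝕜] [PartialOrder 𝕜]
    [IsOrderedRing 𝕜] [AddCommGroup E] [Module 𝕜 E] [AddCommGroup F] [Module 𝕜 F]
    (f : E →ₗ[𝕜] F) {s : Set E} (hs : Convex 𝕜 s) (hf : InjOn f s) :
    f '' extremePoints 𝕜 s = extremePoints 𝕜 (f '' s) := by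
  have hseg (x y : E) : f '' openSegment 𝕜 x y = openSegment 𝕜 (f x) (f y) :=
    image_openSegment 𝕜 f.toAffineMap x y
  ext z
  constructor
  · rintro ⟨x, ⟨hx, hext⟩, rfl⟩
    refine ⟨mem_image_of_mem f hx, ?_⟩
    rintro _ ⟨y₁, hy₁, rfl⟩ _ ⟨y₂, hy₂, rfl⟩ hxy
    obtain ⟨w, hw, hwx⟩ := (hseg y₁ y₂).symm ▸ hxy
    exact congrArg f (hext hy₁ hy₂ (hf (hs.openSegment_subset hy₁ hy₂ hw) hx hwx ▸ hw))
  · rintro ⟨⟨x, hx, rfl⟩, hext⟩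
    refine ⟨x, ⟨hx, fun y₁ hy₁ y₂ hy₂ hxy => ?_⟩, rfl⟩
    exact hf hy₁ hx (hext (mem_image_of_mem f hy₁) (mem_image_of_mem f hy₂)
      (hseg y₁ y₂ ▸ mem_image_of_mem f hxy))

namespace IsStarProjection
variable {A : Type*} [CStarAlgebra A] [PartialOrder A] [StarOrderedRing A] {p : A}

theorem extremePoints_Icc (hp : IsStarProjection p) :
    extremePoints ℝ (Icc 0 p) = {q | IsStarProjection q ∧ q ≤ p} := by
  ext q
  constructor
  · rintro ⟨⟨hq0, hqp⟩, hext⟩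
    obtain ⟨hqp', hpq'⟩ := hp.mul_right_and_mul_left_of_nonneg_of_le hq0 hqp
    have hq : IsSelfAdjoint q := .of_nonneg hq0
    have hsq : q * q ≤ q := by
      simpa [sq] using CStarAlgebra.pow_antitone hq0 (hqp.trans hp.le_one) one_le_two
    -- `q` is the midpoint of `q * q` and `2 q - q * q`, both of which lie in `[0, p]`.
    have hmem : (2 : ℝ) • q - q * q ∈ Icc 0 p := by
      refine ⟨?_, ?_⟩
      · rw [two_smul]; simpa [add_sub_assoc] using add_nonneg hq0 (sub_nonneg.2 hsq)
      · have : p - ((2 : ℝ) • q - q * q) = star (p - q) * (p - q) := by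
          rw [star_sub, hp.isSelfAdjoint.star_eq, hq.star_eq, sub_mul, mul_sub, mul_sub,
            hp.isIdempotentElem.eq, hqp', hpq', two_smul]
          abel
        rw [← sub_nonneg, this]
        exact star_mul_self_nonneg _
    have hidem : q * q = q := hext ⟨hq.mul_self_nonneg, hsq.trans hqp⟩ hmem
      ⟨1 / 2, 1 / 2, by norm_num, by norm_num, by norm_num, by
        rw [smul_sub, smul_smul]; norm_num⟩
    exact ⟨⟨hidem, hq⟩, hqp⟩
  · rintro ⟨hq, hqp⟩
    refine inter_extremePoints_subset_extremePoints_of_subset ?_ ⟨⟨hq.nonneg, hqp⟩,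
      isStarProjection_iff_mem_extremePoints_setOfPred_nonneg_inter_unitClosedBall.1 hq⟩
    rintro x ⟨hx0, hxp⟩
    exact ⟨hx0, mem_closedBall_zero_iff.2
      ((CStarAlgebra.norm_le_norm_of_nonneg_of_le hx0 hxp).trans hp.norm_le)⟩

end IsStarProjection

section RangeProjection
variable {𝕜 E F G : Type*} [RCLike 𝕜] [NormedAddCommGroup E] [NormedSpace 𝕜 E]
  [NormedAddCommGroup F] [InnerProductSpace 𝕜 F] [NormedAddCommGroup G] [NormedSpace 𝕜 G]

theorem ClosedSubmodule.setOf_isStarProjection_le_starProjection_eq_range [CompleteSpace F]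
    (K : ClosedSubmodule 𝕜 F) :
    {q : F →L[𝕜] F | IsStarProjection q ∧ q ≤ (K : Submodule 𝕜 F).starProjection} =
      range fun V : Iic K => ((V : ClosedSubmodule 𝕜 F) : Submodule 𝕜 F).starProjection := by
  ext q
  constructor
  · rintro ⟨hq, hqK⟩
    obtain ⟨U, hU, rfl⟩ := isStarProjection_iff_eq_starProjection.1 hq
    have hUc : IsClosed (U : Set F) := U.orthogonal_orthogonal ▸ Uᗮ.isClosed_orthogonal
    exact ⟨⟨⟨U, hUc⟩, Submodule.starProjection_le_starProjection_iff.1 hqK⟩, rfl⟩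
  · rintro ⟨V, rfl⟩
    exact ⟨isStarProjection_starProjection, Submodule.starProjection_le_starProjection_iff.2
      (ClosedSubmodule.toSubmodule_le_toSubmodule.2 V.2)⟩

namespace ContinuousLinearMap

noncomputable def rangeClosure (r : E →L[𝕜] F) : ClosedSubmodule 𝕜 F :=
  (LinearMap.range (r : E →ₗ[𝕜] F)).closure

theorem apply_mem_rangeClosure (r : E →L[𝕜] F) (x : E) : r x ∈ r.rangeClosure :=
  Submodule.mem_closure_iff.2 (Submodule.le_topologicalClosure _ (LinearMap.mem_range_self _ x))

theorem mem_rangeClosure_iff_mem_closure (r : E →L[𝕜] F) {u : F} :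
    u ∈ r.rangeClosure ↔ u ∈ closure (range r) := by
  rw [rangeClosure, Submodule.mem_closure_iff, ← SetLike.mem_coe, Submodule.topologicalClosure_coe,
    LinearMap.coe_range, coe_coe]

variable [CompleteSpace F]

noncomputable def rangeProjection (r : E →L[𝕜] F) : F →L[𝕜] F :=
  (r.rangeClosure : Submodule 𝕜 F).starProjection

theorem isStarProjection_rangeProjection (r : E →L[𝕜] F) : IsStarProjection r.rangeProjection :=
  isStarProjection_starProjection

/-- Douglas' factorization lemma. -/
theorem exists_norm_le_one_comp_eq [CompleteSpace G] (r : E →L[𝕜] F) (s : E →L[𝕜] G)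
    (h : ∀ x, ‖s x‖ ≤ ‖r x‖) :
    ∃ C : F →L[𝕜] G, ‖C‖ ≤ 1 ∧ C ∘L r = s ∧ C ∘L r.rangeProjection = C := by
  set K : Submodule 𝕜 F := (r.rangeClosure : Submodule 𝕜 F)
  let e : E →ₗ[𝕜] K := (r : E →ₗ[𝕜] F).codRestrict K r.apply_mem_rangeClosure
  have he : DenseRange e := by
    intro k
    rw [Topology.IsInducing.subtypeVal.closure_eq_preimage_closure_image, mem_preimage,
      ← range_comp]
    exact (r.mem_rangeClosure_iff_mem_closure).1 k.2
  have hse (x : E) : ‖s x‖ ≤ 1 * ‖e x‖ := (one_mul ‖r x‖).symm ▸ h x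
  let g : K →L[𝕜] G := (s : E →ₗ[𝕜] G).extendOfNorm e
  have hge (x : E) : g (e x) = s x := LinearMap.extendOfNorm_eq he ⟨1, hse⟩ x
  refine ⟨g ∘L K.orthogonalProjectionOnto, ?_, ?_, ?_⟩
  · refine opNorm_le_bound _ zero_le_one fun x => ?_
    calc ‖g (K.orthogonalProjectionOnto x)‖ ≤ 1 * ‖K.orthogonalProjectionOnto x‖ :=
          LinearMap.norm_extendOfNorm_apply_le he 1 hse _
      _ ≤ 1 * ‖x‖ := by gcongr; exact Submodule.norm_orthogonalProjectionOnto_apply_le K x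
  · ext x
    exact (congrArg g (K.orthogonalProjectionOnto_mem_subspace_eq_self (e x))).trans (hge x)
  · ext x
    exact congrArg g (K.orthogonalProjectionOnto_mem_subspace_eq_self _)

theorem reApplyInnerSelf_star_mul_mul (a X : F →L[𝕜] F) (x : F) :
    (star a * X * a).reApplyInnerSelf x = X.reApplyInnerSelf (a x) := by
  rw [star_eq_adjoint, reApplyInnerSelf_apply, reApplyInnerSelf_apply, mul_apply_eq_comp,
    mul_apply_eq_comp, adjoint_inner_left]

theorem nonneg_of_star_mul_mul_nonneg (r : F →L[𝕜] F) {X : F →L[𝕜] F} (hX : IsSelfAdjoint X)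
    (hXp : X * r.rangeProjection = X) (h : 0 ≤ star r * X * r) : 0 ≤ X := by
  have hp := r.isStarProjection_rangeProjection
  set p := r.rangeProjection
  rw [nonneg_iff_isPositive, isPositive_def'] at h ⊢
  have hK : ∀ u ∈ r.rangeClosure, 0 ≤ X.reApplyInnerSelf u := by
    intro u hu
    refine closure_minimal ?_ (isClosed_le continuous_const X.reApplyInnerSelf_continuous)
      ((r.mem_rangeClosure_iff_mem_closure).1 hu)
    rintro _ ⟨y, rfl⟩
    rw [mem_ofPred_eq, ← reApplyInnerSelf_star_mul_mul]
    exact h.2 y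
  have hX' : star p * X * p = X := by
    have hpX : p * X = X := by
      simpa [hX.star_eq, hp.isSelfAdjoint.star_eq] using congrArg star hXp
    rw [hp.isSelfAdjoint.star_eq, hpX, hXp]
  refine ⟨hX, fun x => ?_⟩
  rw [← hX', reApplyInnerSelf_star_mul_mul]
  exact hK _ (Submodule.starProjection_apply_mem _ x)

end ContinuousLinearMap

end RangeProjection

section Conjugation
variable {H : Type*} [NormedAddCommGroup H] [InnerProductSpace ℂ H] [CompleteSpace H]
  (r : H →L[ℂ] H)

theorem star_mul_mul_le_star_mul_mul_iff {S T : H →L[ℂ] H} (hS : S ∈ Icc 0 r.rangeProjection)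
    (hT : T ∈ Icc 0 r.rangeProjection) : star r * S * r ≤ star r * T * r ↔ S ≤ T := by
  refine ⟨fun h => ?_, fun h => star_left_conjugate_le_conjugate h r⟩
  have hp := r.isStarProjection_rangeProjection
  rw [← sub_nonneg] at h ⊢
  refine nonneg_of_star_mul_mul_nonneg r ((IsSelfAdjoint.of_nonneg hT.1).sub (.of_nonneg hS.1))
    ?_ (by rwa [mul_sub, sub_mul])
  rw [sub_mul, (hp.mul_right_and_mul_left_of_nonneg_of_le hS.1 hS.2).1,
    (hp.mul_right_and_mul_left_of_nonneg_of_le hT.1 hT.2).1]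

theorem injOn_star_mul_mul : InjOn (fun S => star r * S * r) (Icc 0 r.rangeProjection) :=
  fun _ hS _ hT h => le_antisymm ((star_mul_mul_le_star_mul_mul_iff r hS hT).1 h.le)
    ((star_mul_mul_le_star_mul_mul_iff r hT hS).1 h.ge)

theorem exists_mem_Icc_rangeProjection_star_mul_mul_eq {A : H →L[ℂ] H}
    (hA : A ∈ Icc 0 (star r * r)) : ∃ T ∈ Icc 0 r.rangeProjection, star r * T * r = A := by
  have hp := r.isStarProjection_rangeProjection
  obtain ⟨s, rfl⟩ := CStarAlgebra.nonneg_iff_eq_star_mul_self.1 hA.1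
  have hsr (x : H) : ‖s x‖ ≤ ‖r x‖ := by
    have := ((le_def _ _).1 hA.2).re_inner_nonneg_left x
    rw [sub_apply, inner_sub_left, map_sub, sub_nonneg] at this
    rw [← sq_le_sq₀ (norm_nonneg _) (norm_nonneg _), apply_norm_sq_eq_inner_adjoint_left,
      apply_norm_sq_eq_inner_adjoint_left]
    exact this
  obtain ⟨C, hC1, hCr, hCp⟩ := exists_norm_le_one_comp_eq r s hsr
  have hCC : star C * C ≤ 1 := by
    rw [← CStarAlgebra.norm_le_one_iff_of_nonneg _ (star_mul_self_nonneg C),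
      CStarRing.norm_star_mul_self]
    exact mul_le_one₀ hC1 (norm_nonneg C) hC1
  have hCp' : C * r.rangeProjection = C := hCp
  refine ⟨star C * C, ⟨star_mul_self_nonneg C, ?_⟩, ?_⟩
  · calc star C * C = star (C * r.rangeProjection) * (C * r.rangeProjection) := by rw [hCp']
      _ = star r.rangeProjection * (star C * C) * r.rangeProjection := by
          rw [star_mul]; noncomm_ring
      _ ≤ star r.rangeProjection * 1 * r.rangeProjection := star_left_conjugate_le_conjugate hCC _
      _ = r.rangeProjection := by rw [mul_one, hp.isSelfAdjoint.star_eq, hp.isIdempotentElem.eq]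
  · calc star r * (star C * C) * r = star (C * r) * (C * r) := by rw [star_mul]; noncomm_ring
      _ = star s * s := congrArg (fun X => star X * X) hCr

theorem image_star_mul_mul_Icc_rangeProjection :
    (fun S => star r * S * r) '' Icc 0 r.rangeProjection = Icc 0 (star r * r) := by
  refine Subset.antisymm ?_ fun A hA => exists_mem_Icc_rangeProjection_star_mul_mul_eq r hA
  rintro _ ⟨T, hT, rfl⟩
  refine ⟨star_left_conjugate_nonneg hT.1 r, ?_⟩
  simpa using
    star_left_conjugate_le_conjugate (hT.2.trans r.isStarProjection_rangeProjection.le_one) r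

noncomputable def conjStarProjection : Iic r.rangeClosure ↪o (H →L[ℂ] H) :=
  OrderEmbedding.ofMapLEIff
    (fun V => star r * ((V : ClosedSubmodule ℂ H) : Submodule ℂ H).starProjection * r)
    fun V W => by
      have hmem (U : Iic r.rangeClosure) :
          ((U : ClosedSubmodule ℂ H) : Submodule ℂ H).starProjection ∈ Icc 0 r.rangeProjection :=
        ⟨isStarProjection_starProjection.nonneg, Submodule.starProjection_le_starProjection_iff.2
          (ClosedSubmodule.toSubmodule_le_toSubmodule.2 U.2)⟩
      rw [star_mul_mul_le_star_mul_mul_iff r (hmem V) (hmem W),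
        Submodule.starProjection_le_starProjection_iff, ClosedSubmodule.toSubmodule_le_toSubmodule,
        Subtype.coe_le_coe]

theorem extremePoints_Icc_star_mul_self :
    extremePoints ℝ (Icc 0 (star r * r)) = range (conjStarProjection r) := by
  have hconj : ⇑(LinearMap.mulLeftRight ℝ (star r, r)) = fun S => star r * S * r := rfl
  rw [← image_star_mul_mul_Icc_rangeProjection, ← hconj,
    ← LinearMap.image_extremePoints_of_injOn _ (convex_Icc _ _) (hconj ▸ injOn_star_mul_mul r),
    r.isStarProjection_rangeProjection.extremePoints_Icc, rangeProjection,
    ClosedSubmodule.setOf_isStarProjection_le_starProjection_eq_range, ← range_comp]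
  rfl

end Conjugation

theorem extreme_points_lattice
    {H : Type*} [NormedAddCommGroup H] [InnerProductSpace ℂ H] [CompleteSpace H]
    (B : H →L[ℂ] H) (hB : IsPosOp B) (C D : H →L[ℂ] H)
    (hC : C ∈ Set.extremePoints ℝ {A : H →L[ℂ] H | IsPosOp A ∧ OpLe A B})
    (hD : D ∈ Set.extremePoints ℝ {A : H →L[ℂ] H | IsPosOp A ∧ OpLe A B}) :
    (∃ M ∈ Set.extremePoints ℝ {A : H →L[ℂ] H | IsPosOp A ∧ OpLe A B},
      OpLe M C ∧ OpLe M D ∧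
        ∀ G ∈ Set.extremePoints ℝ {A : H →L[ℂ] H | IsPosOp A ∧ OpLe A B},
          OpLe G C → OpLe G D → OpLe G M) ∧
    (∃ N ∈ Set.extremePoints ℝ {A : H →L[ℂ] H | IsPosOp A ∧ OpLe A B},
      OpLe C N ∧ OpLe D N ∧
        ∀ G ∈ Set.extremePoints ℝ {A : H →L[ℂ] H | IsPosOp A ∧ OpLe A B},
          OpLe C G → OpLe D G → OpLe N G) := by
  obtain ⟨r, rfl⟩ := CStarAlgebra.nonneg_iff_eq_star_mul_self.1 ((isPosOp_iff_nonneg B).1 hB)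
  rw [setOf_isPosOp_and_opLe_eq_Icc, extremePoints_Icc_star_mul_self] at hC hD ⊢
  simp only [opLe_iff_le]
  exact ⟨(conjStarProjection r).exists_greatest_lower_bound_mem_range hC hD,
    (conjStarProjection r).exists_least_upper_bound_mem_range hC hD⟩
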